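/- arXiv:2404.01195 — 2 statements merged into one kernel-verified Lean document; each statement's English description precedes it below -/
import Mathlib

section
/- For a Gaussian random variable Δ_N ~ N(μ, τ²) with μ = o_x + c₁ o_z and τ = σ√(1+c₁²), and reliability level r ∈ (1/2, 1), the minimizer s* of |s| over the set {s ∈ ℝ : P(Δ_N + s ≤ 0) ≥ r} equals -max(0, erf⁻¹(2r-1)·σ·√(2(1+c₁²)) + o_x + c₁ o_z). -/
open MeasureTheory ProbabilityTheory

/-- The Gaussian error function erf(x) = (2/√π) ∫₀ˣ e^{-t²} dt. -/
noncomputable def erf (x : ℝ) : ℝ :=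
  (2 / Real.sqrt Real.pi) * ∫ t in (0 : ℝ)..x, Real.exp (-t ^ 2)

/-- The inverse of the Gaussian error function. -/
noncomputable def erfinv : ℝ → ℝ := Function.invFun erf

/-!
The law of `Δ_N` has CDF `a ↦ (1 + erf ((a - μ) / √(2τ²))) / 2`: this function has the Gaussian
density as derivative and tends to `0` at `-∞`, because `erf` is odd and tends to `1` at `+∞`.
As `erf` is strictly increasing, `P(Δ_N + s ≤ 0) ≥ r` says exactly `s ≤ -q` with
`q = erf⁻¹(2r - 1) √(2τ²) + μ`, and the point of `(-∞, -q]` closest to `0` is `-max 0 q`.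
-/

open Real Set Filter Topology

lemma integrable_exp_neg_sq : Integrable (fun t : ℝ => exp (-t ^ 2)) := by
  simpa using integrable_exp_neg_mul_sq one_pos

lemma hasDerivAt_erf (x : ℝ) : HasDerivAt erf (2 / √π * exp (-x ^ 2)) x :=
  .const_mul _ ((continuous_exp.comp (continuous_pow 2).neg).integral_hasStrictDerivAt 0 x).hasDerivAt

lemma continuous_erf : Continuous erf :=
  continuous_iff_continuousAt.2 fun x => (hasDerivAt_erf x).continuousAt

lemma strictMono_erf : StrictMono erf :=
  strictMono_of_hasDerivAt_pos hasDerivAt_erf fun _ => by positivity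

lemma erf_neg (x : ℝ) : erf (-x) = -erf x := by
  have h := intervalIntegral.integral_comp_neg (a := 0) (b := x) fun t => exp (-t ^ 2)
  simp only [neg_sq, neg_zero] at h
  rw [erf, erf, intervalIntegral.integral_symm (-x) 0, ← h]
  ring

lemma tendsto_erf_atTop : Tendsto erf atTop (𝓝 1) := by
  have h := intervalIntegral_tendsto_integral_Ioi 0 integrable_exp_neg_sq.integrableOn tendsto_id
  have hI : ∫ t in Ioi (0 : ℝ), exp (-t ^ 2) = √π / 2 := by
    simpa using integral_gaussian_Ioi 1
  rw [hI] at h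
  have h2 := h.const_mul (2 / √π)
  rwa [show 2 / √π * (√π / 2) = 1 by field_simp] at h2

lemma tendsto_erf_atBot : Tendsto erf atBot (𝓝 (-1)) := by
  have h := (tendsto_erf_atTop.comp tendsto_neg_atBot_atTop).neg
  simpa [Function.comp_def, erf_neg] using h

lemma erf_erfinv {y : ℝ} (hy : y ∈ Ioo (-1) 1) : erf (erfinv y) = y := by
  refine Function.invFun_eq (mem_range_of_exists_le_of_exists_ge continuous_erf ?_ ?_)
  · exact ((tendsto_erf_atBot.eventually (gt_mem_nhds hy.1)).exists).imp fun _ => le_of_lt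
  · exact ((tendsto_erf_atTop.eventually (lt_mem_nhds hy.2)).exists).imp fun _ => le_of_lt

section GaussianCDF

variable (μ : ℝ) {v : NNReal}

lemma sqrt_two_mul_pos (hv : v ≠ 0) : 0 < √(2 * (v : ℝ)) :=
  sqrt_pos.2 (mul_pos two_pos (NNReal.coe_pos.2 (pos_iff_ne_zero.2 hv)))

lemma hasDerivAt_gaussianCDF (hv : v ≠ 0) (x : ℝ) :
    HasDerivAt (fun x => (1 + erf ((x - μ) / √(2 * v))) / 2) (gaussianPDFReal μ v x) x := by
  have h := (((hasDerivAt_erf ((x - μ) / √(2 * v))).comp x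
    (((hasDerivAt_id x).sub_const μ).div_const _)).const_add 1).div_const 2
  refine h.congr_deriv ?_
  have hpi : √(2 * π * v) = √π * √(2 * v) := by
    rw [← sqrt_mul pi_pos.le]; ring_nf
  have hexp : -(x - μ) ^ 2 / (2 * v) = -((x - μ) / √(2 * v)) ^ 2 := by
    rw [div_pow, sq_sqrt (by positivity)]; ring
  unfold gaussianPDFReal
  rw [hpi, hexp]
  field_simp

theorem gaussianReal_Iic (hv : v ≠ 0) (a : ℝ) :
    gaussianReal μ v (Iic a) = ENNReal.ofReal ((1 + erf ((a - μ) / √(2 * v))) / 2) := by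
  rw [gaussianReal_apply_eq_integral μ hv]
  congr 1
  have hlim : Tendsto (fun x => (1 + erf ((x - μ) / √(2 * v))) / 2) atBot (𝓝 0) := by
    have h := tendsto_erf_atBot.comp
      ((tendsto_atBot_add_const_right _ (-μ) tendsto_id).atBot_div_const (sqrt_two_mul_pos hv))
    simpa [Function.comp_def, sub_eq_add_neg] using (h.const_add 1).div_const 2
  rw [integral_Iic_of_hasDerivAt_of_tendsto' (fun x _ => hasDerivAt_gaussianCDF μ hv x)
    (integrable_gaussianPDFReal μ v).integrableOn hlim, sub_zero]

theorem ofReal_le_gaussianReal_Iic_iff (hv : v ≠ 0) {r : ℝ} (hr : r ∈ Ioo 0 1) (a : ℝ) :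
    ENNReal.ofReal r ≤ gaussianReal μ v (Iic a) ↔ erfinv (2 * r - 1) * √(2 * v) + μ ≤ a := by
  have herf : erf (erfinv (2 * r - 1)) = 2 * r - 1 :=
    erf_erfinv ⟨by linarith [hr.1], by linarith [hr.2]⟩
  rw [gaussianReal_Iic μ hv, ENNReal.ofReal_le_ofReal_iff', or_iff_left (not_le.2 hr.1),
    ← le_sub_iff_add_le, ← le_div_iff₀ (sqrt_two_mul_pos hv),
    ← strictMono_erf.le_iff_le (a := erfinv _), herf]
  constructor <;> intro h <;> linarith

end GaussianCDF

lemma abs_neg_max_zero_le_abs {q s : ℝ} (hs : s ≤ -q) : |-max 0 q| ≤ |s| := by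
  rw [abs_neg, abs_of_nonneg (le_max_left _ _)]
  exact max_le (abs_nonneg s) (by linarith [neg_le_abs s])

/-- For Δ_N ~ N(μ, τ²) with μ = o_x + c₁ o_z, τ = σ√(1+c₁²), and r ∈ (1/2, 1),
the minimizer of |s| over {s : P(Δ_N + s ≤ 0) ≥ r} equals
-max(0, erf⁻¹(2r-1)·σ·√(2(1+c₁²)) + o_x + c₁ o_z). -/
theorem stmt_1 (σ c₁ ox oz r : ℝ) (hσ : 0 < σ) (hr : r ∈ Set.Ioo (1 / 2 : ℝ) 1) :
    let μ := ox + c₁ * oz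
    let S : Set ℝ := {s | ENNReal.ofReal r ≤
      (gaussianReal μ ((σ ^ 2 * (1 + c₁ ^ 2)).toNNReal)) {x | x + s ≤ 0}}
    let sstar := -max 0 (erfinv (2 * r - 1) * σ * Real.sqrt (2 * (1 + c₁ ^ 2)) + ox + c₁ * oz)
    sstar ∈ S ∧ ∀ s ∈ S, |sstar| ≤ |s| := by
  intro μ S sstar
  have hvar : (0 : ℝ) ≤ σ ^ 2 * (1 + c₁ ^ 2) := by positivity
  have hv : (σ ^ 2 * (1 + c₁ ^ 2)).toNNReal ≠ 0 := (toNNReal_pos.2 (by positivity)).ne'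
  have hsd : √(2 * ((σ ^ 2 * (1 + c₁ ^ 2)).toNNReal : ℝ)) = σ * √(2 * (1 + c₁ ^ 2)) := by
    rw [coe_toNNReal _ hvar, show 2 * (σ ^ 2 * (1 + c₁ ^ 2)) = σ ^ 2 * (2 * (1 + c₁ ^ 2)) by ring,
      sqrt_mul (sq_nonneg σ), sqrt_sq hσ.le]
  have hS : ∀ s, s ∈ S ↔
      s ≤ -(erfinv (2 * r - 1) * σ * √(2 * (1 + c₁ ^ 2)) + ox + c₁ * oz) := by
    intro s
    have hset : {x : ℝ | x + s ≤ 0} = Iic (-s) := by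
      ext x
      simp [le_neg_iff_add_nonpos_right]
    change ENNReal.ofReal r ≤ gaussianReal μ _ {x | x + s ≤ 0} ↔ _
    rw [hset, ofReal_le_gaussianReal_Iic_iff μ hv ⟨by linarith [hr.1], hr.2⟩, hsd]
    constructor <;> intro h <;> linarith
  exact ⟨(hS _).2 (neg_le_neg (le_max_right _ _)),
    fun s hs => abs_neg_max_zero_le_abs ((hS s).1 hs)⟩
end

section
/- Let f, g : ℝ_+^n → ℝ be increasing functions (with respect to the componentwise order) and let b ∈ ℝ_+^n. Then for x ∈ [0, b], the constraint f(x) - g(x) ≤ 0 holds if and only if there exists t ∈ [0, f(b) - f(0)] such that f(x) + t ≤ f(b) and g(x) + t ≥ f(b). -/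
theorem sub_nonpos_iff_exists_slack {α : Type*} [AddCommGroup α] [PartialOrder α]
    [IsOrderedAddMonoid α] {a c m M : α} (hma : m ≤ a) (haM : a ≤ M) :
    a - c ≤ 0 ↔ ∃ t : α, 0 ≤ t ∧ t ≤ M - m ∧ a + t ≤ M ∧ M ≤ c + t := by
  constructor
  · intro hac
    refine ⟨M - a, sub_nonneg.2 haM, sub_le_sub_left hma M, by rw [add_sub_cancel], ?_⟩
    rw [add_sub_left_comm, le_add_iff_nonneg_right]
    exact sub_nonneg.2 (sub_nonpos.1 hac)
  · rintro ⟨t, -, -, hat, hct⟩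
    exact sub_nonpos.2 (le_of_add_le_add_right (hat.trans hct))

theorem stmt_10_general (n : ℕ) (f g : (Fin n → ℝ) → ℝ) (b : Fin n → ℝ) (hb : 0 ≤ b)
    (hf : MonotoneOn f (Set.Ici (0 : Fin n → ℝ)))
    (x : Fin n → ℝ) (hx0 : 0 ≤ x) (hxb : x ≤ b) :
    f x - g x ≤ 0 ↔
      ∃ t : ℝ, 0 ≤ t ∧ t ≤ f b - f 0 ∧ f x + t ≤ f b ∧ g x + t ≥ f b :=
  sub_nonpos_iff_exists_slack (hf (Set.mem_Ici.2 le_rfl) hx0 hx0) (hf hx0 hb hxb)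

/-- For increasing f, g on ℝ_+^n and x in the box [0, b], the difference-of-monotonic
constraint f(x) - g(x) ≤ 0 holds iff there exists t ∈ [0, f(b) - f(0)] with
f(x) + t ≤ f(b) and g(x) + t ≥ f(b). -/
theorem stmt_10 (n : ℕ) (f g : (Fin n → ℝ) → ℝ) (b : Fin n → ℝ) (hb : 0 ≤ b)
    (hf : MonotoneOn f (Set.Ici (0 : Fin n → ℝ)))
    (hg : MonotoneOn g (Set.Ici (0 : Fin n → ℝ)))
    (x : Fin n → ℝ) (hx0 : 0 ≤ x) (hxb : x ≤ b) :
    f x - g x ≤ 0 ↔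
      ∃ t : ℝ, 0 ≤ t ∧ t ≤ f b - f 0 ∧ f x + t ≤ f b ∧ g x + t ≥ f b :=
  stmt_10_general n f g b hb hf x hx0 hxb
end
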